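/- arXiv:1108.0768 — 2 statements merged into one kernel-verified Lean document; each statement's English description precedes it below -/
import Mathlib

section
/- Let Λ = diag(μ_1,…,μ_n) be a diagonal n×n complex matrix and let A be an n×n complex matrix with I+A invertible, P = (I+A)⁻¹(I−A). Then det(cosh Λ + A sinh Λ) = 2^{−n} det(I+A) · e^{∑_{i=1}^n μ_i} · det(I + P e^{−2Λ}), where cosh Λ = diag(cosh μ_i), sinh Λ = diag(sinh μ_i), e^{−2Λ} = diag(e^{−2μ_i}). -/
open Matrix Complex

/-- For a diagonal matrix `Λ = diag(μ₁, …, μₙ)` and `A` with `I + A` invertible,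
letting `P = (I + A)⁻¹ (I - A)`,
`det (cosh Λ + A sinh Λ) = 2⁻ⁿ det (I + A) e^{∑ μᵢ} det (I + P e^{-2Λ})`. -/
theorem det_cosh_add_mul_sinh (n : ℕ) (μ : Fin n → ℂ) (A : Matrix (Fin n) (Fin n) ℂ)
    (hA : IsUnit (1 + A).det) :
    ((Matrix.diagonal fun i => Complex.cosh (μ i)) +
        A * (Matrix.diagonal fun i => Complex.sinh (μ i))).det
      = (2 : ℂ) ^ (-(n : ℤ)) * (1 + A).det * Complex.exp (∑ i, μ i) *
        (1 + ((1 + A)⁻¹ * (1 - A)) * (Matrix.diagonal fun i => Complex.exp (-2 * μ i))).det := by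
  set P : Matrix (Fin n) (Fin n) ℂ := (1 + A)⁻¹ * (1 - A) with hP
  set D : Matrix (Fin n) (Fin n) ℂ := Matrix.diagonal fun i => Complex.exp (-2 * μ i) with hD
  set E : Matrix (Fin n) (Fin n) ℂ := Matrix.diagonal fun i => Complex.exp (μ i) with hE
  set F : Matrix (Fin n) (Fin n) ℂ := Matrix.diagonal fun i => Complex.exp (-μ i) with hF
  have hDE : D * E = F := by
    rw [hD, hE, hF, Matrix.diagonal_mul_diagonal]
    exact congrArg Matrix.diagonal (funext fun i => by
      rw [← Complex.exp_add]; congr 1; ring)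
  have h1 : (1 + A) * (1 + P * D) = (1 + A) + (1 - A) * D := by
    rw [mul_add, mul_one, hP, ← mul_assoc, Matrix.mul_nonsing_inv_cancel_left _ _ hA]
  have hcosh : (Matrix.diagonal fun i => Complex.cosh (μ i)) = (2 : ℂ)⁻¹ • (E + F) := by
    rw [hE, hF, Matrix.diagonal_add, ← Matrix.diagonal_smul]
    exact congrArg Matrix.diagonal (funext fun i => by
      simp only [Pi.smul_apply, smul_eq_mul]
      rw [← Complex.two_cosh]; ring)
  have hsinh : (Matrix.diagonal fun i => Complex.sinh (μ i)) = (2 : ℂ)⁻¹ • (E - F) := by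
    rw [hE, hF, Matrix.diagonal_sub, ← Matrix.diagonal_smul]
    exact congrArg Matrix.diagonal (funext fun i => by
      simp only [Pi.smul_apply, smul_eq_mul]
      rw [← Complex.two_sinh]; ring)
  have hmain : ((Matrix.diagonal fun i => Complex.cosh (μ i)) +
        A * (Matrix.diagonal fun i => Complex.sinh (μ i)))
      = (2 : ℂ)⁻¹ • ((1 + A) * (1 + P * D) * E) := by
    rw [h1, hcosh, hsinh, add_mul, mul_assoc, hDE, add_mul, one_mul, sub_mul, one_mul]
    rw [Matrix.mul_smul]
    rw [← smul_add]
    congr 1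
    rw [Matrix.mul_sub]
    abel
  rw [hmain, Matrix.det_smul, Matrix.det_mul, Matrix.det_mul, hE, Matrix.det_diagonal,
    ← Complex.exp_sum]
  rw [show ((2 : ℂ)⁻¹) ^ Fintype.card (Fin n) = (2 : ℂ) ^ (-(n : ℤ)) by
    rw [_root_.zpow_neg, zpow_natCast, inv_pow, Fintype.card_fin]]
  ring
end

section
/- (Cauchy determinant identity) For distinct complex numbers p_1,…,p_n and q_1,…,q_n with p_i ≠ q_j for all i,j, det((1/(p_i − q_j))_{1≤i,j≤n}) = ∏_{1≤i<j≤n} (p_i − p_j)(q_j − q_i) / ∏_{1≤i,j≤n} (p_i − q_j). -/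
open Matrix Finset

/-!
Let `fⱼ = ∏_{m ≠ j} (X - q m)`, a polynomial of degree `< n`. The matrix `(fⱼ(xᵢ))` is the
Vandermonde matrix of `x` times the coefficient matrix of the `fⱼ`, so
`det (fⱼ(pᵢ)) · det V(q) = det V(p) · det (fⱼ(qᵢ))`. At the nodes `p`,
`fⱼ(pᵢ) = ∏ₘ (pᵢ - qₘ) · (pᵢ - qⱼ)⁻¹` is a row-scaled Cauchy matrix; at the nodes `q` the matrix
is diagonal with entries `∏_{m ≠ j} (qⱼ - qₘ)`. Cancelling `det V(q) ≠ 0` gives the formula.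
-/

open Polynomial Lagrange

namespace Matrix

variable {R : Type*} [CommRing R] {n : ℕ}

theorem of_eval_eq_vandermonde_mul_of_coeff (v : Fin n → R) (f : Fin n → R[X])
    (hf : ∀ j, (f j).natDegree < n) :
    of (fun i j => (f j).eval (v i)) = vandermonde v * of (fun (k : Fin n) j => (f j).coeff k) := by
  ext i j
  rw [of_apply, mul_apply, eval_eq_sum_range' (hf j), ← Fin.sum_univ_eq_sum_range]
  simp [vandermonde_apply, mul_comm]

theorem det_of_eval_mul_det_vandermonde (v w : Fin n → R) (f : Fin n → R[X])
    (hf : ∀ j, (f j).natDegree < n) :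
    (of fun i j => (f j).eval (v i)).det * (vandermonde w).det
      = (vandermonde v).det * (of fun i j => (f j).eval (w i)).det := by
  rw [of_eval_eq_vandermonde_mul_of_coeff v f hf, of_eval_eq_vandermonde_mul_of_coeff w f hf,
    det_mul, det_mul]
  ring

end Matrix

section NodalComplSingleton

variable {R : Type*} [CommRing R] {n : ℕ} (q : Fin n → R)

theorem natDegree_nodal_compl_singleton_lt [Nontrivial R] (j : Fin n) :
    (nodal {j}ᶜ q).natDegree < n := by
  rw [natDegree_nodal, card_compl, card_singleton, Fintype.card_fin]
  exact Nat.sub_lt (Fin.pos j) one_pos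

theorem of_eval_nodal_compl_singleton_self :
    of (fun i j => (nodal {j}ᶜ q).eval (q i)) = diagonal (fun j => ∏ m ∈ {j}ᶜ, (q j - q m)) := by
  ext i j
  rcases eq_or_ne i j with rfl | hij
  · simp [eval_nodal]
  · rw [diagonal_apply_ne _ hij, of_apply, eval_nodal_at_node (by simpa using hij)]

theorem prod_prod_compl_singleton_sub :
    ∏ j, ∏ m ∈ {j}ᶜ, (q j - q m) = ∏ i, ∏ j ∈ Ioi i, (q i - q j) * (q j - q i) :=
  (prod_prod_Ioi_mul_eq_prod_prod_off_diag fun a b => q b - q a).symm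

end NodalComplSingleton

theorem of_eval_nodal_compl_singleton {K : Type*} [Field K] {n : ℕ} (p q : Fin n → K)
    (hpq : ∀ i j, p i ≠ q j) :
    of (fun i j => (nodal {j}ᶜ q).eval (p i))
      = diagonal (fun i => ∏ m, (p i - q m)) * of (fun i j => (p i - q j)⁻¹) := by
  ext i j
  rw [diagonal_mul, of_apply, of_apply, eval_nodal, Fintype.prod_eq_mul_prod_compl j,
    mul_comm (p i - q j), mul_inv_cancel_right₀ (sub_ne_zero.2 (hpq i j))]

theorem cauchy_determinant_general (n : ℕ) (p q : Fin n → ℂ)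
    (hq : Function.Injective q)
    (hpq : ∀ i j, p i ≠ q j) :
    (Matrix.of fun i j => (p i - q j)⁻¹).det
      = (∏ i, ∏ j ∈ Finset.univ.filter (fun j => i < j), (p i - p j) * (q j - q i))
        / ∏ i, ∏ j, (p i - q j) := by
  have hden : ∏ i, ∏ j, (p i - q j) ≠ 0 :=
    prod_ne_zero_iff.2 fun i _ => prod_ne_zero_iff.2 fun j _ => sub_ne_zero.2 (hpq i j)
  rw [eq_div_iff hden, mul_comm]
  apply mul_right_cancel₀ (det_vandermonde_ne_zero_iff.2 hq)
  have key := det_of_eval_mul_det_vandermonde p q _ (natDegree_nodal_compl_singleton_lt q)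
  rw [of_eval_nodal_compl_singleton p q hpq, of_eval_nodal_compl_singleton_self, det_mul,
    det_diagonal, det_diagonal, prod_prod_compl_singleton_sub] at key
  rw [key, det_vandermonde, det_vandermonde]
  simp only [filter_lt_eq_Ioi, ← prod_mul_distrib]
  refine prod_congr rfl fun i _ => prod_congr rfl fun j _ => ?_
  ring

/-- Cauchy determinant identity: for distinct `p₁,…,pₙ` and distinct `q₁,…,qₙ`
with `pᵢ ≠ qⱼ` for all `i, j`,
`det (1/(pᵢ - qⱼ)) = ∏_{i<j} (pᵢ - pⱼ)(qⱼ - qᵢ) / ∏_{i,j} (pᵢ - qⱼ)`. -/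
theorem cauchy_determinant (n : ℕ) (p q : Fin n → ℂ)
    (hp : Function.Injective p) (hq : Function.Injective q)
    (hpq : ∀ i j, p i ≠ q j) :
    (Matrix.of fun i j => (p i - q j)⁻¹).det
      = (∏ i, ∏ j ∈ Finset.univ.filter (fun j => i < j), (p i - p j) * (q j - q i))
        / ∏ i, ∏ j, (p i - q j) :=
  cauchy_determinant_general n p q hq hpq
end
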